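/- arXiv:1712.05183 — 3 statements merged into one kernel-verified Lean document; each statement's English description precedes it below -/
import Mathlib

section
/- Let S : ℝ → ℝ be sublinear and Lebesgue measurable. Then S restricted to [0,∞) and S restricted to (−∞,0] are both linear: S(x) = x·S(1) for all x ≥ 0 and S(x) = −x·S(−1) for all x ≤ 0. -/
open Filter Topology Set

/-- `S` is subadditive on `ℝ`. -/
def Subadditive' (S : ℝ → ℝ) : Prop := ∀ x y : ℝ, S (x + y) ≤ S x + S y

/-- `S` is sublinear: subadditive and `ℕ`-homogeneous. -/
def Sublinear' (S : ℝ → ℝ) : Prop :=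
  Subadditive' S ∧ ∀ x : ℝ, ∀ n : ℕ, S ((n : ℝ) * x) = (n : ℝ) * S x

/-!
Steinhaus' theorem, applied to a set `{x | S x ≤ N ∧ S (-x) ≤ N}` of positive measure, shows that
`S` is bounded above near `0`, hence by `ℕ`-homogeneity on `[0, 1]`. The function
`g x = S x - x * S 1` is again sublinear and vanishes on `ℕ`; comparing `y ≥ 0` with `⌊y⌋` and `⌈y⌉`
bounds `|g y|` by a constant `C`, and then `n * |g x| = |g (n * x)| ≤ C` for every `n` forces
`g x = 0`. The half-line `(-∞, 0]` is handled by applying this to `x ↦ S (-x)`.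
-/

open MeasureTheory Measure

theorem exists_eventually_le_nhds_zero_of_subadditive {G : Type*} [AddGroup G]
    [TopologicalSpace G] [IsTopologicalAddGroup G] [LocallyCompactSpace G] [MeasurableSpace G]
    [BorelSpace G] (μ : Measure G) [μ.IsAddHaarMeasure] [μ.InnerRegular] {f : G → ℝ}
    (hf : ∀ x y, f (x + y) ≤ f x + f y) (hmeas : Measurable f) :
    ∃ C, ∀ᶠ t in 𝓝 0, f t ≤ C := by
  set B : ℕ → Set G := fun N => {x | f x ≤ N ∧ f (-x) ≤ N}
  have hB : ∀ N, MeasurableSet (B N) := fun N =>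
    (measurableSet_le hmeas measurable_const).inter
      (measurableSet_le (hmeas.comp measurable_neg) measurable_const)
  have hcover : ⋃ N, B N = univ := by
    refine eq_univ_of_forall fun x => mem_iUnion.2 ?_
    obtain ⟨N, hN⟩ := exists_nat_ge (max (f x) (f (-x)))
    exact ⟨N, (le_max_left _ _).trans hN, (le_max_right _ _).trans hN⟩
  obtain ⟨N, hN⟩ : ∃ N, 0 < μ (B N) := by
    by_contra! h
    have : μ (⋃ N, B N) = 0 := measure_iUnion_null fun N => nonpos_iff_eq_zero.1 (h N)
    exact NeZero.ne μ (by simpa [hcover] using this)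
  refine ⟨2 * N, ?_⟩
  filter_upwards [sub_mem_nhds_zero_of_addHaar_pos μ _ (hB N) hN]
  rintro _ ⟨a, ha, b, hb, rfl⟩
  have := hf a (-b)
  rw [← sub_eq_add_neg] at this
  linarith [ha.1, hb.2]

theorem nonpos_of_forall_nat_mul_le {a C : ℝ} (h : ∀ n : ℕ, (n : ℝ) * a ≤ C) : a ≤ 0 := by
  by_contra! ha
  obtain ⟨n, hn⟩ := exists_nat_gt (C / a)
  exact (h n).not_gt ((div_lt_iff₀ ha).1 hn)

theorem exists_le_on_Icc_of_eventually_le_nhds_zero {S : ℝ → ℝ}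
    (hhom : ∀ x : ℝ, ∀ n : ℕ, S ((n : ℝ) * x) = (n : ℝ) * S x)
    (hbdd : ∃ C, ∀ᶠ t in 𝓝 0, S t ≤ C) : ∃ C, ∀ t ∈ Icc (0 : ℝ) 1, S t ≤ C := by
  obtain ⟨C, hC⟩ := hbdd
  obtain ⟨δ, hδ, hball⟩ := Metric.eventually_nhds_iff_ball.1 hC
  obtain ⟨n, hn⟩ := exists_nat_one_div_lt hδ
  refine ⟨(n + 1) * C, fun t ht => ?_⟩
  have hsmall : t / (n + 1) ∈ Metric.ball 0 δ := by
    rw [mem_ball_zero_iff, Real.norm_eq_abs,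
      abs_of_nonneg (div_nonneg ht.1 (by positivity))]
    exact lt_of_le_of_lt (div_le_div_of_nonneg_right ht.2 (by positivity)) hn
  have := hhom (t / (n + 1)) (n + 1)
  push_cast at this
  rw [mul_div_cancel₀ _ (by positivity)] at this
  rw [this]
  exact mul_le_mul_of_nonneg_left (hball _ hsmall) (by positivity)

namespace Sublinear'

variable {S : ℝ → ℝ}

theorem comp_neg (hS : Sublinear' S) : Sublinear' fun x => S (-x) :=
  ⟨fun x y => by simpa only [neg_add] using hS.1 (-x) (-y),
   fun x n => by simpa only [mul_neg] using hS.2 (-x) n⟩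

theorem sub_mul_const (hS : Sublinear' S) (a : ℝ) : Sublinear' fun x => S x - x * a :=
  ⟨fun x y => by linarith [hS.1 x y], fun x n => by beta_reduce; rw [hS.2 x n]; ring⟩

theorem map_natCast (hS : Sublinear' S) (n : ℕ) : S n = n * S 1 := by
  simpa using hS.2 1 n

theorem abs_le_of_map_one_eq_zero (hS : Sublinear' S) (h1 : S 1 = 0) {C : ℝ}
    (hC : ∀ t ∈ Icc (0 : ℝ) 1, S t ≤ C) {y : ℝ} (hy : 0 ≤ y) : |S y| ≤ C := by
  have hnat (n : ℕ) : S n = 0 := by rw [hS.map_natCast, h1, mul_zero]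
  have hfloor : S y ≤ S ⌊y⌋₊ + S (y - ⌊y⌋₊) := by
    simpa using hS.1 ⌊y⌋₊ (y - ⌊y⌋₊)
  have hceil : S ⌈y⌉₊ ≤ S y + S (⌈y⌉₊ - y) := by
    simpa using hS.1 y (⌈y⌉₊ - y)
  have hfloor_mem : y - ⌊y⌋₊ ∈ Icc (0 : ℝ) 1 :=
    ⟨sub_nonneg.2 (Nat.floor_le hy), by linarith [Nat.lt_floor_add_one y]⟩
  have hceil_mem : (⌈y⌉₊ : ℝ) - y ∈ Icc (0 : ℝ) 1 :=
    ⟨sub_nonneg.2 (Nat.le_ceil y), by linarith [Nat.ceil_lt_add_one hy]⟩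
  rw [abs_le]
  constructor <;> linarith [hnat ⌊y⌋₊, hnat ⌈y⌉₊, hC _ hfloor_mem, hC _ hceil_mem]

theorem eq_zero_of_map_one_eq_zero (hS : Sublinear' S) (h1 : S 1 = 0) {C : ℝ}
    (hC : ∀ t ∈ Icc (0 : ℝ) 1, S t ≤ C) {x : ℝ} (hx : 0 ≤ x) : S x = 0 := by
  have hmul (n : ℕ) : (n : ℝ) * |S x| ≤ C := by
    have := hS.abs_le_of_map_one_eq_zero h1 hC (mul_nonneg n.cast_nonneg hx)
    rwa [hS.2 x n, abs_mul, Nat.abs_cast] at this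
  exact abs_nonpos_iff.1 (nonpos_of_forall_nat_mul_le hmul)

theorem eq_mul_of_exists_le_on_Icc (hS : Sublinear' S)
    (hbdd : ∃ C, ∀ t ∈ Icc (0 : ℝ) 1, S t ≤ C) {x : ℝ} (hx : 0 ≤ x) : S x = x * S 1 := by
  obtain ⟨C, hC⟩ := hbdd
  have hgC : ∀ t ∈ Icc (0 : ℝ) 1, S t - t * S 1 ≤ C + |S 1| := fun t ht => by
    have : |t * S 1| ≤ |S 1| := by
      rw [abs_mul, abs_of_nonneg ht.1]
      exact mul_le_of_le_one_left (abs_nonneg _) ht.2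
    linarith [hC t ht, neg_abs_le (t * S 1)]
  have := (hS.sub_mul_const (S 1)).eq_zero_of_map_one_eq_zero (by simp) hgC hx
  linarith

theorem eq_mul_of_measurable (hS : Sublinear' S) (hmeas : Measurable S) {x : ℝ} (hx : 0 ≤ x) :
    S x = x * S 1 :=
  hS.eq_mul_of_exists_le_on_Icc (exists_le_on_Icc_of_eventually_le_nhds_zero hS.2
    (exists_eventually_le_nhds_zero_of_subadditive volume hS.1 hmeas)) hx

end Sublinear'

/-- Paper's Theorem BM (measurable case): a Lebesgue-measurable sublinear
`S : ℝ → ℝ` is linear on each of `[0,∞)` and `(-∞,0]`. -/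
theorem berz_theoremBM_measurable (S : ℝ → ℝ) (hS : Sublinear' S)
    (hmeas : Measurable S) :
    (∀ x : ℝ, 0 ≤ x → S x = x * S 1) ∧
    (∀ x : ℝ, x ≤ 0 → S x = -x * S (-1)) := by
  refine ⟨fun x hx => hS.eq_mul_of_measurable hmeas hx, fun x hx => ?_⟩
  simpa using hS.comp_neg.eq_mul_of_measurable (hmeas.comp measurable_neg) (neg_nonneg.2 hx)
end

section
/- Let Σ ⊆ [0,∞) be locally Steinhaus–Weil and accumulate at 0, and let S : ℝ → ℝ be subadditive with S(0) = 0. If there is c ∈ ℝ with S(σ) ≤ c·σ for all σ ∈ Σ, then S(x) ≤ c·x for all x > 0; consequently limsup_{x↓0} S(x) ≤ 0 and lim_{x↓0} S(x) = 0. If in addition there exists a strictly negative sequence z_n increasing to 0 with S(z_n) → 0, then S is continuous at 0 and hence continuous everywhere on ℝ. -/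
open Filter Topology Set Pointwise

/-- `Σ ⊆ ℝ` is locally Steinhaus–Weil: for `x, y ∈ Σ` and all sufficiently small
`δ > 0`, `x + y` lies in the interior of `Σ_x^δ + Σ_y^δ` and `x - y` lies in the
interior of `Σ_x^δ - Σ_y^δ`, where `Σ_z^δ := Σ ∩ (z - δ, z + δ)`. -/
def LocallySW (Sig : Set ℝ) : Prop :=
  ∀ x ∈ Sig, ∀ y ∈ Sig, ∃ δ₀ : ℝ, 0 < δ₀ ∧ ∀ δ : ℝ, 0 < δ → δ ≤ δ₀ →
    x + y ∈ interior ((Sig ∩ Set.Ioo (x - δ) (x + δ)) + (Sig ∩ Set.Ioo (y - δ) (y + δ))) ∧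
    x - y ∈ interior ((Sig ∩ Set.Ioo (x - δ) (x + δ)) - (Sig ∩ Set.Ioo (y - δ) (y + δ)))

/-!
The points `t` with `S t ≤ c t` form an additive subsemigroup `P ⊇ Σ` of `ℝ`. By the
Steinhaus–Weil property, `Σ + Σ ⊆ P` contains an interval `[2σ, 2σ + s)` with `σ, s ∈ Σ`
arbitrarily small and positive; its translates by multiples of `s` fill `[2σ, ∞)`, so
`S x ≤ c x` for all `x > 0`. As `S (n x) ≤ n S x` and `S` is bounded below on `[1, 2]`, `S` is
bounded below by a linear function near `0⁺`, whence `S(0+) = 0`. On the left,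
`c x ≤ S x ≤ S zₙ + S (x - zₙ)` squeezes `S(0-)` to `0`. Finally a subadditive function
continuous at `0` is continuous, since `S x - S (x - y) ≤ S y ≤ S x + S (y - x)`.
-/

theorem exists_mem_Ioo_of_accPt {Sig : Set ℝ} (hSig : Sig ⊆ Ici 0) (hacc : AccPt (0 : ℝ) (𝓟 Sig))
    {η : ℝ} (hη : 0 < η) : ∃ σ ∈ Sig, σ ∈ Ioo 0 η := by
  obtain ⟨σ, ⟨hσ0, hσ⟩, hση⟩ :=
    (accPt_iff_frequently.1 hacc).and_eventually (Iio_mem_nhds hη) |>.exists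
  exact ⟨σ, hσ, (hSig hσ).lt_of_ne' hσ0, hση⟩

theorem LocallySW.add_mem_interior_add {Sig : Set ℝ} (hSW : LocallySW Sig) {x y : ℝ}
    (hx : x ∈ Sig) (hy : y ∈ Sig) : x + y ∈ interior (Sig + Sig) := by
  obtain ⟨δ₀, hδ₀, h⟩ := hSW x hx y hy
  exact interior_mono (add_subset_add inter_subset_left inter_subset_left) (h δ₀ hδ₀ le_rfl).1

theorem AddSubsemigroup.add_nsmul_mem {M : Type*} [AddMonoid M] (P : AddSubsemigroup M)
    {t s : M} (ht : t ∈ P) (hs : s ∈ P) (n : ℕ) : t + n • s ∈ P := by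
  induction n with
  | zero => simpa using ht
  | succ n ih => simpa only [succ_nsmul, ← add_assoc] using P.add_mem ih hs

theorem AddSubsemigroup.Ici_subset_of_Ico_subset (P : AddSubsemigroup ℝ) {a s : ℝ}
    (hI : Ico a (a + s) ⊆ P) (hs : s ∈ P) (hs0 : 0 < s) : Ici a ⊆ P := by
  intro x hx
  set k := ⌊(x - a) / s⌋₊
  have hq : 0 ≤ (x - a) / s := div_nonneg (sub_nonneg.2 hx) hs0.le
  have hk_le : k * s ≤ x - a := (le_div_iff₀ hs0).1 (Nat.floor_le hq)
  have hlt_k : x - a < (k + 1) * s := (div_lt_iff₀ hs0).1 (Nat.lt_floor_add_one _)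
  have hmem := P.add_nsmul_mem (hI ⟨by linarith, by linarith⟩ : x - k * s ∈ P) hs k
  rwa [nsmul_eq_mul, sub_add_cancel] at hmem

namespace Subadditive'

variable {S : ℝ → ℝ}

def leMulSubsemigroup (hsub : Subadditive' S) (c : ℝ) : AddSubsemigroup ℝ where
  carrier := {t | S t ≤ c * t}
  add_mem' {a b} ha hb := (hsub a b).trans (by rw [mul_add]; exact add_le_add ha hb)

theorem le_mul_of_locallySW {Sig : Set ℝ} (hSig : Sig ⊆ Ici 0) (hSW : LocallySW Sig)
    (hacc : AccPt (0 : ℝ) (𝓟 Sig)) (hsub : Subadditive' S) {c : ℝ}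
    (hc : ∀ σ ∈ Sig, S σ ≤ c * σ) (x : ℝ) (hx : 0 < x) : S x ≤ c * x := by
  let P := hsub.leMulSubsemigroup c
  have hSigP : Sig ⊆ P := hc
  have hSumP : Sig + Sig ⊆ P := add_subset_iff.2 fun a ha b hb => P.add_mem (hSigP ha) (hSigP hb)
  obtain ⟨σ, hσ, hσ0, hσx⟩ := exists_mem_Ioo_of_accPt hSig hacc (half_pos hx)
  obtain ⟨ε, hε, hball⟩ :=
    Metric.mem_nhds_iff.1 (mem_interior_iff_mem_nhds.1 (hSW.add_mem_interior_add hσ hσ))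
  obtain ⟨s, hs, hs0, hsε⟩ := exists_mem_Ioo_of_accPt hSig hacc hε
  have hIco : Ico (σ + σ) (σ + σ + s) ⊆ P := fun t ht =>
    hSumP (hball (by rw [Real.ball_eq_Ioo]; exact ⟨by linarith [ht.1], by linarith [ht.2]⟩))
  exact P.Ici_subset_of_Ico_subset hIco (hSigP hs) hs0 (show σ + σ ≤ x by linarith)

theorem apply_nat_mul_le (hsub : Subadditive' S) (x : ℝ) {n : ℕ} (hn : 1 ≤ n) :
    S (n * x) ≤ n * S x := by
  induction n, hn using Nat.le_induction with
  | base => simp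
  | succ n _ ih =>
    push_cast
    calc S ((n + 1) * x) = S (n * x + x) := by ring_nf
      _ ≤ S (n * x) + S x := hsub _ _
      _ ≤ (n + 1) * S x := by linarith

theorem exists_mul_le_apply (hsub : Subadditive' S) {c : ℝ} (hup : ∀ x, 0 < x → S x ≤ c * x) :
    ∃ m, ∀ x ∈ Ioo (0 : ℝ) 1, m * x ≤ S x := by
  have hbdd : ∀ t ∈ Icc (1 : ℝ) 2, S 3 - 2 * |c| ≤ S t := by
    intro t ht
    have h3 : S 3 ≤ S t + S (3 - t) := by simpa using hsub t (3 - t)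
    have hc : c * (3 - t) ≤ 2 * |c| := by
      nlinarith [le_abs_self c, neg_abs_le c, abs_nonneg c, ht.1, ht.2]
    linarith [hup (3 - t) (by linarith [ht.2])]
  refine ⟨min (S 3 - 2 * |c|) 0, fun x hx => ?_⟩
  set m := min (S 3 - 2 * |c|) 0
  set n := ⌈1 / x⌉₊
  have hx0 := hx.1
  have hn_ge : 1 ≤ n * x := by
    have := Nat.le_ceil (1 / x); rwa [div_le_iff₀ hx0] at this
  have hn_lt : n * x < 2 := by
    have := Nat.ceil_lt_add_one (one_div_pos.2 hx0).le
    nlinarith [mul_div_cancel₀ (1 : ℝ) hx0.ne', hx.2]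
  have hn : 1 ≤ n := Nat.one_le_cast.1 (by nlinarith [hx.2] : (1 : ℝ) ≤ n)
  have hm_le : m ≤ n * S x :=
    (min_le_left _ _).trans ((hbdd _ ⟨hn_ge, hn_lt.le⟩).trans (hsub.apply_nat_mul_le x hn))
  have hm0 : m ≤ 0 := min_le_right _ _
  have hn0 : (0 : ℝ) < n := by positivity
  refine le_of_mul_le_mul_left ?_ hn0
  nlinarith [mul_le_mul_of_nonpos_left hn_ge hm0]

theorem tendsto_nhdsGT_zero (hsub : Subadditive' S) {c : ℝ}
    (hup : ∀ x, 0 < x → S x ≤ c * x) : Tendsto S (𝓝[>] 0) (𝓝 0) := by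
  obtain ⟨m, hm⟩ := hsub.exists_mul_le_apply hup
  have hid : Tendsto (fun x : ℝ => x) (𝓝[>] 0) (𝓝 0) := tendsto_id.mono_left nhdsWithin_le_nhds
  refine tendsto_of_tendsto_of_tendsto_of_le_of_le' (by simpa using hid.const_mul m)
    (by simpa using hid.const_mul c) ?_ ?_
  · filter_upwards [Ioo_mem_nhdsGT one_pos] with x hx using hm x hx
  · filter_upwards [self_mem_nhdsWithin] with x hx using hup x hx

theorem mul_le_apply_of_neg (hsub : Subadditive' S) (h0 : S 0 = 0) {c : ℝ}
    (hup : ∀ x, 0 < x → S x ≤ c * x) {x : ℝ} (hx : x < 0) : c * x ≤ S x := by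
  have h := hsub x (-x)
  rw [add_neg_cancel, h0] at h
  linarith [hup (-x) (neg_pos.2 hx)]

theorem apply_le_of_lt_of_neg (hsub : Subadditive' S) {c : ℝ} (hup : ∀ x, 0 < x → S x ≤ c * x)
    {z x : ℝ} (hzx : z < x) (hx : x < 0) : S x ≤ S z + |c| * -z :=
  calc S x = S (z + (x - z)) := by rw [add_sub_cancel]
    _ ≤ S z + S (x - z) := hsub _ _
    _ ≤ S z + |c| * -z := by
      have := hup (x - z) (sub_pos.2 hzx)
      nlinarith [le_abs_self c, abs_nonneg c]

theorem tendsto_nhdsLT_zero (hsub : Subadditive' S) (h0 : S 0 = 0) {c : ℝ}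
    (hup : ∀ x, 0 < x → S x ≤ c * x) {z : ℕ → ℝ} (hz : ∀ n, z n < 0)
    (hz0 : Tendsto z atTop (𝓝 0)) (hSz : Tendsto (fun n => S (z n)) atTop (𝓝 0)) :
    Tendsto S (𝓝[<] 0) (𝓝 0) := by
  have hlin : Tendsto (fun x : ℝ => c * x) (𝓝[<] 0) (𝓝 0) := by
    simpa using ((tendsto_id (x := 𝓝 (0 : ℝ))).mono_left nhdsWithin_le_nhds).const_mul c
  have hbound : Tendsto (fun n => S (z n) + |c| * -z n) atTop (𝓝 0) := by
    simpa using hSz.add (hz0.neg.const_mul |c|)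
  refine tendsto_order.2 ⟨fun a ha => ?_, fun a ha => ?_⟩
  · filter_upwards [(tendsto_order.1 hlin).1 a ha, self_mem_nhdsWithin] with x hax hx
    exact hax.trans_le (hsub.mul_le_apply_of_neg h0 hup hx)
  · obtain ⟨n, hn⟩ := ((tendsto_order.1 hbound).2 a ha).exists
    filter_upwards [Ioo_mem_nhdsLT (hz n)] with x hx
    exact (hsub.apply_le_of_lt_of_neg hup hx.1 hx.2).trans_lt hn

theorem continuous_of_continuousAt_zero (hsub : Subadditive' S) (h0 : S 0 = 0)
    (hS : ContinuousAt S 0) : Continuous S := by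
  rw [ContinuousAt, h0] at hS
  refine continuous_iff_continuousAt.2 fun x => ?_
  have hsub_x : Tendsto (fun y => S (y - x)) (𝓝 x) (𝓝 0) :=
    hS.comp (tendsto_sub_nhds_zero_iff.2 tendsto_id)
  have hx_sub : Tendsto (fun y => S (x - y)) (𝓝 x) (𝓝 0) :=
    hS.comp (by simpa using (tendsto_sub_nhds_zero_iff.2 (tendsto_id (x := 𝓝 x))).neg)
  refine tendsto_of_tendsto_of_tendsto_of_le_of_le (by simpa using tendsto_const_nhds.sub hx_sub)
    (by simpa using tendsto_const_nhds.add hsub_x) (fun y => ?_) (fun y => ?_)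
  · linarith [show S x ≤ S y + S (x - y) by simpa using hsub y (x - y)]
  · simpa using hsub x (y - x)

end Subadditive'

/-- Paper's Theorem 0⁺: for `Σ ⊆ [0,∞)` locally Steinhaus–Weil and accumulating at
`0`, and `S` subadditive with `S 0 = 0` linearly bounded above by `c·σ` on `Σ`,
one has `S x ≤ c·x` for all `x > 0`, `limsup_{x↓0} S x ≤ 0` and `S(0+) = 0`;
if moreover `S zₙ → 0` for some strictly negative sequence `zₙ` increasing to `0`,
then `S` is continuous at `0` and hence everywhere. -/
theorem berz_theorem0_plus (Sig : Set ℝ) (hSig : Sig ⊆ Set.Ici (0 : ℝ))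
    (hSW : LocallySW Sig) (hacc : AccPt (0 : ℝ) (𝓟 Sig))
    (S : ℝ → ℝ) (hsub : Subadditive' S) (h0 : S 0 = 0)
    (c : ℝ) (hc : ∀ σ ∈ Sig, S σ ≤ c * σ) :
    (∀ x : ℝ, 0 < x → S x ≤ c * x) ∧
    Filter.limsup S (𝓝[>] (0 : ℝ)) ≤ 0 ∧
    Tendsto S (𝓝[>] (0 : ℝ)) (𝓝 0) ∧
    ((∃ z : ℕ → ℝ, (∀ n, z n < 0) ∧ StrictMono z ∧ Tendsto z atTop (𝓝 0) ∧
        Tendsto (fun n => S (z n)) atTop (𝓝 0)) →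
      ContinuousAt S 0 ∧ Continuous S) := by
  have hup := hsub.le_mul_of_locallySW hSig hSW hacc hc
  have hright := hsub.tendsto_nhdsGT_zero hup
  refine ⟨hup, hright.limsup_eq.le, hright, ?_⟩
  rintro ⟨z, hz, -, hz0, hSz⟩
  have hleft := hsub.tendsto_nhdsLT_zero h0 hup hz hz0 hSz
  have hS0 : ContinuousAt S 0 := by
    rw [continuousAt_iff_continuous_left_right, ← continuousWithinAt_Iio_iff_Iic,
      ← continuousWithinAt_Ioi_iff_Ici, ContinuousWithinAt, ContinuousWithinAt, h0]
    exact ⟨hleft, hright⟩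
  exact ⟨hS0, hsub.continuous_of_continuousAt_zero h0 hS0⟩
end

section
/- (Quantifier-weakened Berz theorem.) Let S : ℝ → ℝ be locally bounded and subadditive with S(0) = 0, satisfying the weak Heiberg–Seneta condition: there is a locally Steinhaus–Weil set Σ ⊆ (0,∞) accumulating at 0 with limsup_{t↓0, t∈Σ} S(t)/t < ∞. Let 𝔸 be a dense, divisible additive subgroup of ℝ such that S|𝔸 is ℕ-homogeneous: S(na) = nS(a) for all a ∈ 𝔸 and n ∈ ℕ. Then S restricted to [0,∞) and to (−∞,0] is linear: with β_S := inf_{t>0} S(t)/t and α_S := sup_{z<0} S(z)/z, one has S(t) = β_S·t and S(−t) = −α_S·t for all t ≥ 0. -/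
open Filter Topology Set Pointwise

/-- `S` is locally bounded: bounded on every bounded interval. -/
def LocallyBounded' (S : ℝ → ℝ) : Prop :=
  ∀ r : ℝ, 0 < r → ∃ M : ℝ, ∀ x : ℝ, |x| ≤ r → |S x| ≤ M

/-- `β_S := inf_{t>0} S t / t`. -/
noncomputable def betaS (S : ℝ → ℝ) : ℝ :=
  sInf ((fun t => S t / t) '' Set.Ioi (0 : ℝ))

/-- `α_S := sup_{z<0} S z / z`. -/
noncomputable def alphaS (S : ℝ → ℝ) : ℝ :=
  sSup ((fun z => S z / z) '' Set.Iio (0 : ℝ))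

/- The weak Heiberg–Seneta bound `S u ≤ K u` on `Σ` near `0`, combined with subadditivity, bounds
`S` by `K (u + v)` on `Σ_ρ + Σ_ρ`, where `Σ_ρ := Σ ∩ (-ρ, ρ)`; by the Steinhaus–Weil property this
sumset has interior, so `S` is uniformly small on a nonempty open set in every neighbourhood of `0`.
That is all the regularity needed: if `S (q a) = q S a` for positive rationals `q`, then every
`t` with the sign of `a` is approximated by some `q a` with `S` small at `± (q a - t)`, and
subadditivity squeezes `S t` onto the line through `(a, S a)`. -/

def SmallOnOpenSetsNearZero (S : ℝ → ℝ) : Prop :=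
  ∀ ε > 0, ∃ U : Set ℝ, IsOpen U ∧ U.Nonempty ∧ U ⊆ Metric.ball 0 ε ∧ ∀ r ∈ U, S r ≤ ε

section

variable {S : ℝ → ℝ}

theorem Subadditive'.comp_neg (hS : Subadditive' S) : Subadditive' (fun x => S (-x)) :=
  fun x y => by simpa only [neg_add] using hS (-x) (-y)

theorem SmallOnOpenSetsNearZero.comp_neg (hS : SmallOnOpenSetsNearZero S) :
    SmallOnOpenSetsNearZero (fun x => S (-x)) := by
  intro ε hε
  obtain ⟨U, hU, hne, hUε, hSU⟩ := hS ε hε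
  refine ⟨-U, hU.neg, hne.neg, fun r hr => ?_, fun r hr => hSU (-r) hr⟩
  simpa using hUε hr

theorem exists_nonneg_eventually_le_mul_of_limsup_lt_top {Sig : Set ℝ} (hSig : Sig ⊆ Ioi 0)
    (h : limsup (fun t : ℝ => ((S t / t : ℝ) : EReal)) (𝓝[Sig] 0) < ⊤) :
    ∃ K : ℝ, 0 ≤ K ∧ ∀ᶠ u in 𝓝[Sig] 0, S u ≤ K * u := by
  obtain ⟨C, hlim, hC⟩ := exists_between h
  refine ⟨max C.toReal 0, le_max_right _ _, ?_⟩
  filter_upwards [eventually_lt_of_limsup_lt hlim, self_mem_nhdsWithin] with u hu huSig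
  have hu0 : 0 < u := hSig huSig
  rw [← EReal.coe_toReal hC.ne (bot_le.trans_lt hlim).ne', EReal.coe_lt_coe_iff,
    div_lt_iff₀ hu0] at hu
  nlinarith [le_max_left C.toReal 0]

theorem LocallySW.interior_add_inter_ball_nonempty {Sig : Set ℝ} (hSW : LocallySW Sig)
    (h0 : (0 : ℝ) ∈ closure Sig) {ρ : ℝ} (hρ : 0 < ρ) :
    (interior ((Sig ∩ Metric.ball 0 ρ) + (Sig ∩ Metric.ball 0 ρ))).Nonempty := by
  obtain ⟨x, hxSig, hx⟩ := Metric.mem_closure_iff.mp h0 (ρ / 2) (half_pos hρ)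
  obtain ⟨δ₀, hδ₀, hSWx⟩ := hSW x hxSig x hxSig
  have hsub : Sig ∩ Ioo (x - min δ₀ (ρ / 2)) (x + min δ₀ (ρ / 2)) ⊆ Sig ∩ Metric.ball 0 ρ := by
    rintro y ⟨hy, hyl, hyr⟩
    refine ⟨hy, ?_⟩
    rw [Metric.mem_ball, Real.dist_eq, sub_zero, abs_lt]
    rw [Real.dist_eq, zero_sub, abs_neg, abs_lt] at hx
    constructor <;> linarith [min_le_right δ₀ (ρ / 2)]
  exact ⟨x + x, interior_mono (add_subset_add hsub hsub)
    (hSWx _ (lt_min hδ₀ (half_pos hρ)) (min_le_left _ _)).1⟩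

theorem Subadditive'.smallOnOpenSetsNearZero (hS : Subadditive' S) {Sig : Set ℝ}
    (hSW : LocallySW Sig) (h0 : (0 : ℝ) ∈ closure Sig) {K : ℝ} (hK0 : 0 ≤ K)
    (hK : ∀ᶠ u in 𝓝[Sig] 0, S u ≤ K * u) : SmallOnOpenSetsNearZero S := by
  intro ε hε
  obtain ⟨θ, hθ, hθK⟩ := Metric.mem_nhdsWithin_iff.mp hK
  set ρ := min θ (ε / (2 * (K + 1)))
  have hρ : 0 < ρ := lt_min hθ (by positivity)
  have hρε : 2 * ρ * (K + 1) ≤ ε := by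
    have := min_le_right θ (ε / (2 * (K + 1)))
    rw [le_div_iff₀ (by positivity)] at this
    linarith
  have hbound : ∀ u ∈ Sig ∩ Metric.ball 0 ρ, |u| < ρ ∧ S u ≤ K * u := fun u ⟨hu, hub⟩ =>
    ⟨by simpa using hub, hθK ⟨Metric.ball_subset_ball (min_le_left _ _) hub, hu⟩⟩
  suffices key : ∀ r ∈ (Sig ∩ Metric.ball 0 ρ) + (Sig ∩ Metric.ball 0 ρ),
      r ∈ Metric.ball 0 ε ∧ S r ≤ ε from
    ⟨_, isOpen_interior, hSW.interior_add_inter_ball_nonempty h0 hρ,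
      fun r hr => (key r (interior_subset hr)).1, fun r hr => (key r (interior_subset hr)).2⟩
  rintro _ ⟨u, hu, v, hv, rfl⟩
  obtain ⟨hu, hSu⟩ := hbound u hu
  obtain ⟨hv, hSv⟩ := hbound v hv
  have huv : |u + v| < 2 * ρ := by linarith [abs_add_le u v]
  have hKuv : K * (u + v) ≤ K * (2 * ρ) :=
    mul_le_mul_of_nonneg_left ((le_abs_self _).trans huv.le) hK0
  refine ⟨?_, by linarith [hS u v]⟩
  rw [Metric.mem_ball, Real.dist_eq, sub_zero]
  nlinarith

theorem exists_pos_rat_mul_sub_mem {a t : ℝ} (ha : 0 < a) {U : Set ℝ} (hU : IsOpen U)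
    (hne : U.Nonempty) (hUt : U ⊆ Metric.ball 0 t) : ∃ q : ℚ, 0 < q ∧ (q : ℝ) * a - t ∈ U := by
  have hdense : DenseRange fun q : ℚ => (q : ℝ) * a :=
    (mul_right_surjective₀ ha.ne').denseRange.comp Rat.denseRange_cast (continuous_mul_const a)
  obtain ⟨r, hr⟩ := hne
  obtain ⟨q, hq⟩ := hdense.exists_mem_open (hU.preimage (continuous_sub_right t)) ⟨r + t, by simpa⟩
  have hqa : 0 < (q : ℝ) * a := by
    have := hUt hq
    rw [Metric.mem_ball, Real.dist_eq, sub_zero, abs_lt] at this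
    linarith
  exact ⟨q, by exact_mod_cast pos_of_mul_pos_left hqa ha.le, hq⟩

theorem le_of_eventually_le_add_mul {x y C : ℝ} (h : ∀ᶠ ε in 𝓝[>] 0, x ≤ y + C * ε) : x ≤ y := by
  refine ge_of_tendsto (((continuous_const.add (continuous_const.mul continuous_id)).tendsto' 0 y
    (by simp)).mono_left nhdsWithin_le_nhds) h

theorem neg_mul_le_abs_mul {c r ε : ℝ} (hr : |r| < ε) : -(c * r) ≤ |c| * ε := by
  calc -(c * r) ≤ |c * r| := neg_le_abs _
    _ = |c| * |r| := abs_mul c r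
    _ ≤ |c| * ε := mul_le_mul_of_nonneg_left hr.le (abs_nonneg c)

variable (hS : Subadditive' S) (hsmall : SmallOnOpenSetsNearZero S) {a t : ℝ} (ha : 0 < a)
  (hhom : ∀ q : ℚ, 0 < q → S (q * a) = q * S a)
include hS hsmall ha hhom

theorem Subadditive'.div_mul_le_of_rat_homogeneous (ht : 0 < t) : S a / a * t ≤ S t := by
  refine le_of_eventually_le_add_mul (C := 1 + |S a / a|) ?_
  filter_upwards [Ioo_mem_nhdsGT ht] with ε ⟨hε, hεt⟩
  obtain ⟨U, hU, hne, hUε, hSU⟩ := hsmall ε hε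
  obtain ⟨q, hq, hqU⟩ :=
    exists_pos_rat_mul_sub_mem ha hU hne (hUε.trans (Metric.ball_subset_ball hεt.le))
  have hr : |(q : ℝ) * a - t| < ε := by simpa using hUε hqU
  have hline : S a / a * (q * a) = S (q * a) := by rw [hhom q hq]; field_simp
  calc S a / a * t = S a / a * (q * a) - S a / a * (q * a - t) := by ring
    _ ≤ S (t + (q * a - t)) + |S a / a| * ε := by
        rw [hline, add_sub_cancel]; linarith [neg_mul_le_abs_mul (c := S a / a) hr]
    _ ≤ S t + (1 + |S a / a|) * ε := by linarith [hS t (q * a - t), hSU _ hqU]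

theorem Subadditive'.le_div_mul_of_rat_homogeneous (ht : 0 < t) : S t ≤ S a / a * t := by
  refine le_of_eventually_le_add_mul (C := 1 + |S a / a|) ?_
  filter_upwards [Ioo_mem_nhdsGT ht] with ε ⟨hε, hεt⟩
  obtain ⟨U, hU, hne, hUε, hSU⟩ := hsmall ε hε
  obtain ⟨q, hq, hqU⟩ := exists_pos_rat_mul_sub_mem ha hU.neg hne.neg
    (fun r hr => by simpa using Metric.ball_subset_ball hεt.le (hUε hr))
  have hqU' : t - q * a ∈ U := by simpa using hqU
  have hr : |t - (q : ℝ) * a| < ε := by simpa using hUε hqU'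
  have hline : S (q * a) = S a / a * (q * a) := by rw [hhom q hq]; field_simp
  calc S t = S (q * a + (t - q * a)) := by rw [add_sub_cancel]
    _ ≤ S a / a * (q * a) + ε := by linarith [hS (q * a) (t - q * a), hSU _ hqU']
    _ = S a / a * t - S a / a * (t - q * a) + ε := by ring
    _ ≤ S a / a * t + (1 + |S a / a|) * ε := by linarith [neg_mul_le_abs_mul (c := S a / a) hr]

theorem Subadditive'.eq_div_mul_of_rat_homogeneous_of_pos (ht : 0 < t) : S t = S a / a * t :=
  le_antisymm (hS.le_div_mul_of_rat_homogeneous hsmall ha hhom ht)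
    (hS.div_mul_le_of_rat_homogeneous hsmall ha hhom ht)

end

theorem Subadditive'.eq_div_mul_of_rat_homogeneous {S : ℝ → ℝ} (hS : Subadditive' S)
    (hsmall : SmallOnOpenSetsNearZero S) {a t : ℝ}
    (hhom : ∀ q : ℚ, 0 < q → S (q * a) = q * S a) (hta : 0 < t * a) : S t = S a / a * t := by
  rcases lt_or_gt_of_ne (right_ne_zero_of_mul hta.ne') with ha | ha
  · have ht : 0 < -t := by nlinarith
    have hhom' : ∀ q : ℚ, 0 < q → S (-(q * -a)) = q * S (-(-a)) := by
      simpa only [mul_neg, neg_neg] using hhom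
    have := hS.comp_neg.eq_div_mul_of_rat_homogeneous_of_pos hsmall.comp_neg (neg_pos.mpr ha)
      hhom' ht
    simp only [neg_neg] at this
    rw [this, div_neg, neg_mul_neg]
  · exact hS.eq_div_mul_of_rat_homogeneous_of_pos hsmall ha hhom (pos_of_mul_pos_left hta ha.le)

theorem rat_homogeneous_of_nat_homogeneous {S : ℝ → ℝ} {A : AddSubgroup ℝ}
    (hdiv : ∀ a ∈ A, ∀ k : ℕ, 0 < k → a / (k : ℝ) ∈ A)
    (hhom : ∀ a ∈ A, ∀ n : ℕ, S ((n : ℝ) * a) = (n : ℝ) * S a) {a : ℝ} (ha : a ∈ A) {q : ℚ}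
    (hq : 0 ≤ q) : S (q * a) = q * S a := by
  obtain ⟨n, hn⟩ : ∃ n : ℕ, (n : ℤ) = q.num :=
    ⟨q.num.toNat, Int.toNat_of_nonneg (Rat.num_nonneg.mpr hq)⟩
  have hb := hdiv a ha q.den q.pos
  have hden : (q.den : ℝ) ≠ 0 := by positivity
  have hq' : (q : ℝ) = n / q.den := by rw [Rat.cast_def, ← hn]; norm_cast
  calc S (q * a) = n * S (a / q.den) := by
        rw [← hhom _ hb]; congr 1; rw [hq']; field_simp
    _ = q * (q.den * S (a / q.den)) := by rw [hq']; field_simp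
    _ = q * S a := by rw [← hhom _ hb, mul_div_cancel₀ a hden]

theorem betaS_eq_of_forall {S : ℝ → ℝ} {c : ℝ} (h : ∀ t > 0, S t = c * t) : betaS S = c := by
  have : (fun t => S t / t) '' Ioi 0 = {c} := by
    refine (((nonempty_Ioi (a := (0 : ℝ))).image _).subset_singleton_iff).mp ?_
    rintro _ ⟨t, ht, rfl⟩
    show S t / t = c
    rw [h t ht, mul_div_cancel_right₀ c ht.ne']
  rw [betaS, this, csInf_singleton]

theorem alphaS_eq_of_forall {S : ℝ → ℝ} {c : ℝ} (h : ∀ z < 0, S z = c * z) : alphaS S = c := by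
  have : (fun z => S z / z) '' Iio 0 = {c} := by
    refine (((nonempty_Iio (a := (0 : ℝ))).image _).subset_singleton_iff).mp ?_
    rintro _ ⟨z, hz, rfl⟩
    show S z / z = c
    rw [h z hz, mul_div_cancel_right₀ c hz.ne]
  rw [alphaS, this, csSup_singleton]

theorem berz_theorem5_general (S : ℝ → ℝ) (hsub : Subadditive' S)
    (Sig : Set ℝ) (hSig : Sig ⊆ Set.Ioi (0 : ℝ)) (hSW : LocallySW Sig)
    (hacc : AccPt (0 : ℝ) (𝓟 Sig))
    (hWHS : Filter.limsup (fun t : ℝ => ((S t / t : ℝ) : EReal)) (𝓝[Sig] (0 : ℝ)) < ⊤)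
    (A : AddSubgroup ℝ) (hdense : Dense (A : Set ℝ))
    (hdiv : ∀ a ∈ A, ∀ k : ℕ, 0 < k → a / (k : ℝ) ∈ A)
    (hhom : ∀ a ∈ A, ∀ n : ℕ, S ((n : ℝ) * a) = (n : ℝ) * S a) :
    ∀ t : ℝ, 0 ≤ t → S t = betaS S * t ∧ S (-t) = -(alphaS S * t) := by
  obtain ⟨K, hK0, hK⟩ := exists_nonneg_eventually_le_mul_of_limsup_lt_top hSig hWHS
  have hsmall := hsub.smallOnOpenSetsNearZero hSW
    (mem_closure_iff_clusterPt.mpr hacc.clusterPt) hK0 hK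
  have hratA : ∀ a ∈ A, ∀ q : ℚ, 0 < q → S (q * a) = q * S a :=
    fun a ha q hq => rat_homogeneous_of_nat_homogeneous hdiv hhom ha hq.le
  obtain ⟨a, haA, ha, -⟩ := hdense.exists_between zero_lt_one
  have hpos : ∀ t > 0, S t = S a / a * t := fun t ht =>
    hsub.eq_div_mul_of_rat_homogeneous hsmall (hratA a haA) (mul_pos ht ha)
  have hneg : ∀ z < 0, S z = S (-a) / -a * z := fun z hz =>
    hsub.eq_div_mul_of_rat_homogeneous hsmall (hratA (-a) (neg_mem haA)) (by nlinarith)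
  have hS0 : S 0 = 0 := by simpa using hhom 0 A.zero_mem 0
  intro t ht
  rcases ht.eq_or_lt with rfl | ht
  · simp [hS0]
  rw [betaS_eq_of_forall hpos, alphaS_eq_of_forall hneg]
  exact ⟨hpos t ht, by rw [hneg (-t) (neg_neg_of_pos ht)]; ring⟩

/-- Paper's Theorem 5 (quantifier-weakened Berz theorem): for `S` locally bounded
and subadditive with `S 0 = 0`, satisfying the weak Heiberg–Seneta condition
(w.r.t. a locally Steinhaus–Weil set `Σ ⊆ (0,∞)` accumulating at `0`), and
`ℕ`-homogeneous on a dense divisible additive subgroup `𝔸` of `ℝ`, the function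
`S` is linear on each half-line: `S t = β_S·t` and `S (-t) = -α_S·t` for `t ≥ 0`. -/
theorem berz_theorem5 (S : ℝ → ℝ) (hlb : LocallyBounded' S) (hsub : Subadditive' S)
    (h0 : S 0 = 0)
    (Sig : Set ℝ) (hSig : Sig ⊆ Set.Ioi (0 : ℝ)) (hSW : LocallySW Sig)
    (hacc : AccPt (0 : ℝ) (𝓟 Sig))
    (hWHS : Filter.limsup (fun t : ℝ => ((S t / t : ℝ) : EReal)) (𝓝[Sig] (0 : ℝ)) < ⊤)
    (A : AddSubgroup ℝ) (hdense : Dense (A : Set ℝ))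
    (hdiv : ∀ a ∈ A, ∀ k : ℕ, 0 < k → a / (k : ℝ) ∈ A)
    (hhom : ∀ a ∈ A, ∀ n : ℕ, S ((n : ℝ) * a) = (n : ℝ) * S a) :
    ∀ t : ℝ, 0 ≤ t → S t = betaS S * t ∧ S (-t) = -(alphaS S * t) :=
  berz_theorem5_general S hsub Sig hSig hSW hacc hWHS A hdense hdiv hhom
end
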